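/- arXiv:2508.03384 — 2 statements merged into one kernel-verified Lean document; each statement's English description precedes it below -/
import Mathlib

section
/- Let n = p_1 ⋯ p_l be a Cunningham product, let N = C_n be the cyclic group of order n, and let π be the set of primes dividing n. Then Hol(N) contains a unique Hall π-subgroup H, i.e., a unique subgroup whose order is a product of primes in π and whose index in Hol(N) is divisible by no prime in π; moreover this subgroup H is normal in Hol(N) and has order n · p_2 p_3 ⋯ p_l. -/
/-! For `n = p₁ ⋯ p_l` we get `φ(n) = ∏ (pᵢ - 1) = (p₂ ⋯ p_l) · 2^(l-1) (p_l - 1)`, and the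
second factor `b` is prime to `n` because every `pᵢ` is odd and exceeds `p_l - 1`. In the
abelian group `Aut(C_n) ≅ (ℤ/n)ˣ` the elements killed by `m = p₂ ⋯ p_l` then form a subgroup of
order `m` and index `b`; its preimage in `Hol(C_n)` is a normal subgroup of order `n m` and index
`b`, hence a normal Hall `π`-subgroup. A normal Hall `π`-subgroup contains every `π`-subgroup, so
it is the only Hall `π`-subgroup. -/

/-- The holomorph `Hol(N) = N ⋊ Aut(N)` of a group `N`, with multiplication
`[η, α][μ, β] = [η α(μ), α β]`. -/
abbrev Hol (N : Type*) [Group N] : Type _ :=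
  N ⋊[MonoidHom.id (MulAut N)] MulAut N

/-- `H` is a Hall `π`-subgroup of `G`: its order is a product of primes in `π` and its
index is divisible by no prime in `π`. -/
def IsHallPiSubgroup {G : Type*} [Group G] (π : Set ℕ) (H : Subgroup G) : Prop :=
  (∀ q : ℕ, q.Prime → q ∣ Nat.card H → q ∈ π) ∧ ∀ q ∈ π, ¬ q ∣ H.index

open Finset

lemma Nat.coprime_of_forall_mem_of_forall_not_dvd {π : Set ℕ} {a b : ℕ}
    (ha : ∀ q : ℕ, q.Prime → q ∣ a → q ∈ π) (hb : ∀ q ∈ π, ¬ q ∣ b) : a.Coprime b :=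
  Nat.coprime_of_dvd fun q hq hqa => hb q (ha q hq hqa)

namespace IsHallPiSubgroup

variable {G : Type*} [Group G] {π : Set ℕ} {H K : Subgroup G}

lemma of_coprime_index {n : ℕ} (hcard : ∀ q : ℕ, q.Prime → q ∣ Nat.card H → q ∣ n)
    (hindex : n.Coprime H.index) : IsHallPiSubgroup {q : ℕ | q.Prime ∧ q ∣ n} H :=
  ⟨fun q hq hqH => ⟨hq, hcard q hq hqH⟩,
    fun _ ⟨hq, hqn⟩ hqi => hq.one_lt.ne' (Nat.eq_one_of_dvd_coprimes hindex hqn hqi)⟩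

lemma le_of_normal [Finite G] [H.Normal] (hH : IsHallPiSubgroup π H)
    (hK : ∀ q : ℕ, q.Prime → q ∣ Nat.card K → q ∈ π) : K ≤ H := by
  have hcop : (Nat.card K).Coprime H.index := Nat.coprime_of_forall_mem_of_forall_not_dvd hK hH.2
  have hmap : Nat.card (K.map (QuotientGroup.mk' H)) = 1 :=
    Nat.eq_one_of_dvd_coprimes hcop (Subgroup.card_map_dvd _ _)
      (H.index_eq_card ▸ Subgroup.card_subgroup_dvd_card _)
  rwa [Subgroup.card_eq_one, Subgroup.map_eq_bot_iff, QuotientGroup.ker_mk'] at hmap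

lemma eq_of_normal [Finite G] [H.Normal] (hH : IsHallPiSubgroup π H)
    (hK : IsHallPiSubgroup π K) : K = H := by
  have hKH : K ≤ H := hH.le_of_normal hK.1
  have hcop : (Nat.card H).Coprime K.index := Nat.coprime_of_forall_mem_of_forall_not_dvd hH.1 hK.2
  have hrel : K.relIndex H = 1 := Nat.eq_one_of_dvd_coprimes hcop (Subgroup.relIndex_dvd_card _ _)
    (Subgroup.relIndex_mul_index hKH ▸ dvd_mul_right _ _)
  exact le_antisymm hKH (Subgroup.relIndex_eq_one.mp hrel)

end IsHallPiSubgroup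

lemma CommGroup.card_ker_powMonoidHom_of_coprime {A : Type*} [CommGroup A] [Finite A] {m b : ℕ}
    (hcard : Nat.card A = m * b) (hmb : m.Coprime b) :
    Nat.card (powMonoidHom m : A →* A).ker = m := by
  set K := (powMonoidHom m : A →* A).ker
  set R := (powMonoidHom m : A →* A).range
  have hKR : Nat.card K * Nat.card R = m * b := by
    rw [← Subgroup.index_ker, Subgroup.card_mul_index, hcard]
  have hK : (Nat.card K).Coprime b :=
    Nat.Coprime.coprime_dvd_left (card_dvd_exponent_pow_rank' K fun g => Subtype.ext g.2)
      (hmb.pow_left _)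
  have hR : (Nat.card R).Coprime m := by
    refine Nat.Coprime.coprime_dvd_left (card_dvd_exponent_pow_rank' R fun y => ?_)
      (hmb.symm.pow_left _)
    obtain ⟨x, hx⟩ := y.2
    ext
    rw [Subgroup.coe_pow, ← hx, powMonoidHom_apply, ← pow_mul, ← hcard]
    exact pow_card_eq_one'
  exact Nat.dvd_antisymm (hK.dvd_of_dvd_mul_right (hKR ▸ dvd_mul_right _ _))
    (hR.symm.dvd_of_dvd_mul_right (hKR ▸ dvd_mul_right _ _))

instance Hol.finite {N : Type*} [Group N] [Finite N] : Finite (Hol N) :=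
  have : Finite (MulAut N) := inferInstanceAs (Finite (N ≃* N))
  .of_equiv _ SemidirectProduct.equivProd.symm

lemma Hol.exists_normal_subgroup_card_index {N : Type*} [Group N] [Finite N] [IsCyclic N]
    {m b : ℕ} (htot : (Nat.card N).totient = m * b) (hmb : m.Coprime b) :
    ∃ H : Subgroup (Hol N), H.Normal ∧ Nat.card H = Nat.card N * m ∧ H.index = b := by
  let e := IsCyclic.mulAutMulEquiv N
  have hAut : Nat.card (MulAut N) = m * b := by rw [IsCyclic.card_mulAut, htot]
  let P := (powMonoidHom m : (ZMod (Nat.card N))ˣ →* _).ker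
  have hP : Nat.card P = m := CommGroup.card_ker_powMonoidHom_of_coprime
    ((Nat.card_congr e.toEquiv).symm.trans hAut) hmb
  let H : Subgroup (Hol N) := P.comap (e.toMonoidHom.comp SemidirectProduct.rightHom)
  have hPindex : P.index = b := by
    have h := Subgroup.card_mul_index P
    rw [hP, ← Nat.card_congr e.toEquiv, hAut] at h
    exact Nat.eq_of_mul_eq_mul_left (hP ▸ Nat.card_pos) h
  have hindex : H.index = b := by
    rw [Subgroup.index_comap_of_surjective _
      (e.surjective.comp SemidirectProduct.rightHom_surjective), hPindex]
  refine ⟨H, inferInstance, ?_, hindex⟩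
  have h := H.card_mul_index
  rw [hindex, SemidirectProduct.card, hAut, ← mul_assoc] at h
  exact Nat.eq_of_mul_eq_mul_right (Nat.pos_of_ne_zero (hPindex ▸ P.index_ne_zero_of_finite)) h

lemma Nat.totient_prod_of_prime {ι : Type*} {s : Finset ι} {f : ι → ℕ}
    (hf : ∀ i ∈ s, (f i).Prime) (hinj : Set.InjOn f s) :
    (∏ i ∈ s, f i).totient = ∏ i ∈ s, (f i - 1) := by
  classical
  induction s using Finset.induction_on with
  | empty => simp
  | insert a s ha ih =>
    rw [coe_insert, Set.injOn_insert (mod_cast ha)] at hinj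
    have hfa := hf a (mem_insert_self a s)
    have hcop : (f a).Coprime (∏ i ∈ s, f i) := Nat.Coprime.prod_right fun i hi =>
      (Nat.coprime_primes hfa (hf i (mem_insert_of_mem hi))).mpr fun h => hinj.2 ⟨i, hi, h.symm⟩
    rw [prod_insert ha, prod_insert ha, Nat.totient_mul hcop, Nat.totient_prime hfa,
      ih (fun i hi => hf i (mem_insert_of_mem hi)) hinj.1]

section CunninghamChain

variable {l : ℕ} {p : ℕ → ℕ}

lemma strictAntiOn_of_cunningham_chain (hchain : ∀ i, 1 ≤ i → i < l → p i = 2 * p (i + 1) + 1) :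
    StrictAntiOn p (Set.Icc 1 l) := by
  rintro i ⟨hi, -⟩ j ⟨-, hj⟩ hij
  induction j, hij using Nat.le_induction with
  | base => rw [Nat.succ_eq_add_one, hchain i hi (by omega)]; omega
  | succ j hij ih => have := hchain j (by omega) (by omega); have := ih (by omega); omega

lemma prod_Icc_sub_one_of_cunningham_chain (hchain : ∀ i, 1 ≤ i → i < l → p i = 2 * p (i + 1) + 1)
    (hl : 1 ≤ l) : ∏ i ∈ Icc 1 l, (p i - 1) = (∏ i ∈ Icc 2 l, p i) * (2 ^ (l - 1) * (p l - 1)) := by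
  induction l, hl using Nat.le_induction with
  | base => simp
  | succ l hl ih =>
    rw [prod_Icc_succ_top (by omega), prod_Icc_succ_top (by omega),
      ih fun i hi hil => hchain i hi (by omega), hchain l hl (by omega), Nat.add_sub_cancel,
      show l + 1 - 1 = l - 1 + 1 by omega, pow_succ]
    ring

lemma totient_prod_of_cunningham_chain (hprime : ∀ i, 1 ≤ i → i ≤ l → (p i).Prime)
    (hchain : ∀ i, 1 ≤ i → i < l → p i = 2 * p (i + 1) + 1) (hl : 1 ≤ l) :
    (∏ i ∈ Icc 1 l, p i).totient = (∏ i ∈ Icc 2 l, p i) * (2 ^ (l - 1) * (p l - 1)) := by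
  rw [Nat.totient_prod_of_prime (fun i hi => hprime i (mem_Icc.mp hi).1 (mem_Icc.mp hi).2)
    (coe_Icc 1 l ▸ (strictAntiOn_of_cunningham_chain hchain).injOn),
    prod_Icc_sub_one_of_cunningham_chain hchain hl]

lemma coprime_prod_of_cunningham_chain (hprime : ∀ i, 1 ≤ i → i ≤ l → (p i).Prime)
    (hodd : ∀ i, 1 ≤ i → i ≤ l → Odd (p i))
    (hchain : ∀ i, 1 ≤ i → i < l → p i = 2 * p (i + 1) + 1) :
    (∏ i ∈ Icc 1 l, p i).Coprime (2 ^ (l - 1) * (p l - 1)) := by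
  refine Nat.Coprime.prod_left fun i hi => ?_
  obtain ⟨hi1, hil⟩ := mem_Icc.mp hi
  have hpl : p l ≤ p i := (strictAntiOn_of_cunningham_chain hchain).antitoneOn
    ⟨hi1, hil⟩ ⟨hi1.trans hil, le_rfl⟩ hil
  have hpl_two := (hprime l (hi1.trans hil) le_rfl).two_le
  exact Nat.Coprime.mul_right ((Nat.coprime_two_right.mpr (hodd i hi1 hil)).pow_right _)
    (Nat.coprime_of_lt_prime (by omega) (by omega) (hprime i hi1 hil))

end CunninghamChain

/-- Let `n = p₁ ⋯ p_l` be a Cunningham product, `N = C_n` cyclic of order `n`, and `π`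
the set of primes dividing `n`.  Then `Hol(N)` contains a unique Hall `π`-subgroup `H`;
moreover this subgroup is normal in `Hol(N)` and has order `n · p₂ p₃ ⋯ p_l`. -/
theorem unique_hall_subgroup_of_holomorph_cyclic_cunningham
    (l : ℕ) (hl : 1 ≤ l) (p : ℕ → ℕ)
    (hprime : ∀ i, 1 ≤ i → i ≤ l → (p i).Prime)
    (hodd : ∀ i, 1 ≤ i → i ≤ l → Odd (p i))
    (hchain : ∀ i, 1 ≤ i → i < l → p i = 2 * p (i + 1) + 1)
    (n : ℕ) (hn : n = ∏ i ∈ Finset.Icc 1 l, p i) :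
    (∃! H : Subgroup (Hol (Multiplicative (ZMod n))),
        IsHallPiSubgroup {q : ℕ | q.Prime ∧ q ∣ n} H) ∧
      ∀ H : Subgroup (Hol (Multiplicative (ZMod n))),
        IsHallPiSubgroup {q : ℕ | q.Prime ∧ q ∣ n} H →
          H.Normal ∧ Nat.card H = n * ∏ i ∈ Finset.Icc 2 l, p i := by
  have htot := totient_prod_of_cunningham_chain hprime hchain hl
  have hcop := coprime_prod_of_cunningham_chain hprime hodd hchain
  rw [← hn] at htot hcop
  have hmn : ∏ i ∈ Icc 2 l, p i ∣ n :=
    hn ▸ prod_dvd_prod_of_subset _ _ _ (Icc_subset_Icc_left one_le_two)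
  have : NeZero n := ⟨hn ▸ prod_ne_zero_iff.mpr fun i hi =>
    (hprime i (mem_Icc.mp hi).1 (mem_Icc.mp hi).2).ne_zero⟩
  have hcardN : Nat.card (Multiplicative (ZMod n)) = n := by
    rw [Nat.card_congr Multiplicative.toAdd, Nat.card_zmod]
  obtain ⟨H, hHnormal, hHcard, hHindex⟩ :=
    Hol.exists_normal_subgroup_card_index (hcardN ▸ htot) (hcop.coprime_dvd_left hmn)
  rw [hcardN] at hHcard
  have hHall : IsHallPiSubgroup {q : ℕ | q.Prime ∧ q ∣ n} H :=
    .of_coprime_index (fun q hq hqH => (hq.dvd_mul.mp (hHcard ▸ hqH)).elim id (·.trans hmn))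
      (hHindex ▸ hcop)
  have huniq : ∀ K, IsHallPiSubgroup {q : ℕ | q.Prime ∧ q ∣ n} K → K = H :=
    fun K hK => hHall.eq_of_normal hK
  refine ⟨⟨H, hHall, huniq⟩, fun K hK => ?_⟩
  rw [huniq K hK]
  exact ⟨hHnormal, hHcard⟩
end

section
/- Let n = p_1 ⋯ p_l be a Cunningham product and let G be any group of order n. Then Hol(C_n) contains a regular subgroup isomorphic to G, i.e., a subgroup whose induced action on C_n is transitive with trivial point stabilisers. (Via the Greither–Pareigis/Byott correspondence, this says that every Galois field extension of degree n admits a Hopf–Galois structure of cyclic type.) -/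
/-- The natural action of the holomorph on `N`: `[η, α] · x = η α(x)`. -/
def holSmul {N : Type*} [Group N] (g : Hol N) (x : N) : N :=
  g.left * g.right x

section Holomorph

variable {N N' N₂ G G' H : Type*} [Group N] [Group N'] [Group N₂] [Group G] [Group G'] [Group H]

lemma holSmul_mul (g h : Hol N) (x : N) : holSmul (g * h) x = holSmul g (holSmul h x) := by
  simp [holSmul, mul_assoc]

lemma holSmul_one (g : Hol N) : holSmul g 1 = g.left := by
  simp [holSmul]

/-- `(ψ g).left` is the image of `1` under `ψ g`, so this says that the orbit map of `1` is a
bijection `G → N`. -/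
def IsRegularHom (ψ : G →* Hol N) : Prop :=
  Function.Bijective fun g => (ψ g).left

def holCongr (e : N ≃* N') : Hol N →* Hol N' :=
  SemidirectProduct.map e.toMonoidHom (MulAut.congr e).toMonoidHom fun α => by ext; simp

def holProd : Hol N × Hol N₂ →* Hol (N × N₂) where
  toFun x := ⟨(x.1.left, x.2.left), MulEquiv.prodCongr x.1.right x.2.right⟩
  map_one' := by ext <;> simp [MulEquiv.prodCongr]
  map_mul' x y := by ext <;> simp [MulEquiv.prodCongr]

namespace IsRegularHom

variable {ψ : G →* Hol N}

lemma injective (hψ : IsRegularHom ψ) : Function.Injective ψ :=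
  fun _ _ h => hψ.1 (congrArg SemidirectProduct.left h)

lemma isRegular_range (hψ : IsRegularHom ψ) :
    (∀ a b : N, ∃ g ∈ ψ.range, holSmul g a = b) ∧
      ∀ g ∈ ψ.range, ∀ x : N, holSmul g x = x → g = 1 := by
  have orbit (x : N) : ∃ g, holSmul (ψ g) 1 = x := by simpa only [holSmul_one] using hψ.2 x
  constructor
  · intro a b
    obtain ⟨g, rfl⟩ := orbit a
    obtain ⟨h, rfl⟩ := orbit b
    refine ⟨ψ (h * g⁻¹), ⟨_, rfl⟩, ?_⟩
    rw [← holSmul_mul, ← map_mul, inv_mul_cancel_right]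
  · rintro _ ⟨k, rfl⟩ x hx
    obtain ⟨h, rfl⟩ := orbit x
    rw [← holSmul_mul, ← map_mul, holSmul_one, holSmul_one] at hx
    rw [mul_eq_right.mp (hψ.1 hx), map_one]

lemma comp_mulEquiv (hψ : IsRegularHom ψ) (e : G' ≃* G) : IsRegularHom (ψ.comp e.toMonoidHom) :=
  hψ.comp e.bijective

lemma holCongr_comp (hψ : IsRegularHom ψ) (e : N ≃* N') : IsRegularHom ((holCongr e).comp ψ) :=
  e.bijective.comp hψ

lemma semidirectProduct {ψ : H →* Hol N₂} (hψ : IsRegularHom ψ) (α : H →* MulAut N) :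
    IsRegularHom (holProd.comp ((SemidirectProduct.map (MonoidHom.id N) α fun _ => rfl).prod
      (ψ.comp SemidirectProduct.rightHom)) : N ⋊[α] H →* Hol (N × N₂)) :=
  (Function.bijective_id.prodMap hψ).comp SemidirectProduct.equivProd.bijective

end IsRegularHom

end Holomorph

section SquarefreeOrder

variable {G : Type*} [Group G]

lemma IsPGroup.le_of_coprime_index {p : ℕ} {P N : Subgroup G} [N.Normal] (hP : IsPGroup p P)
    (hp : p.Coprime N.index) : P ≤ N := by
  intro x hx
  have h_dvd_index : orderOf (x : G ⧸ N) ∣ N.index := orderOf_dvd_natCard _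
  have h_dvd_order : orderOf (x : G ⧸ N) ∣ orderOf x := orderOf_map_dvd (QuotientGroup.mk' N) x
  have h_coprime : (orderOf x).Coprime N.index := by
    simpa only [Subgroup.orderOf_mk] using hP.orderOf_coprime hp ⟨x, hx⟩
  rw [← QuotientGroup.eq_one_iff, ← orderOf_eq_one_iff]
  exact Nat.eq_one_of_dvd_coprimes h_coprime h_dvd_order h_dvd_index

namespace Sylow

variable [Finite G] {p : ℕ} [Fact p.Prime]

lemma card_eq_of_squarefree (hsq : Squarefree (Nat.card G)) (hp : p ∣ Nat.card G)
    (P : Sylow p G) : Nat.card P = p := by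
  rw [P.card_eq_multiplicity, Nat.factorization_eq_one_of_squarefree hsq Fact.out hp, pow_one]

lemma coe_eq_top_of_forall_prime_dvd_eq (h : ∀ s, s.Prime → s ∣ Nat.card G → s = p)
    (P : Sylow p G) : (P : Subgroup G) = ⊤ := by
  rw [← Subgroup.index_eq_one, Nat.eq_one_iff_not_exists_prime_dvd]
  intro s hs hsP
  obtain rfl := h s hs (hsP.trans (Subgroup.index_dvd_card _))
  exact P.not_dvd_index hsP

lemma normal_of_squarefree (hsq : Squarefree (Nat.card G))
    (hmax : ∀ s, s.Prime → s ∣ Nat.card G → s ≤ p) (P : Sylow p G) : (P : Subgroup G).Normal := by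
  induction hn : Nat.card G using Nat.strong_induction_on generalizing G with
  | _ n ih =>
  subst hn
  by_cases honly : ∀ s, s.Prime → s ∣ Nat.card G → s = p
  · rw [P.coe_eq_top_of_forall_prime_dvd_eq honly]
    infer_instance
  push Not at honly
  obtain ⟨s, hs, hsG, hsp⟩ := honly
  set q := (Nat.card G).minFac with hq_def
  have hqp : q ≠ p := ((Nat.minFac_le_of_dvd hs.two_le hsG).trans_lt
    ((hmax s hs hsG).lt_of_ne hsp)).ne
  have hq : q.Prime := Nat.minFac_prime fun h => hs.ne_one (Nat.dvd_one.mp (h ▸ hsG))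
  have := Fact.mk hq
  obtain ⟨Q⟩ : Nonempty (Sylow q G) := inferInstance
  have hQ : Nat.card Q = q := Q.card_eq_of_squarefree hsq (Nat.minFac_dvd _)
  have hQ_cyclic : IsCyclic Q := isCyclic_of_prime_card hQ
  -- Burnside's normal complement of the cyclic Sylow subgroup for the smallest prime.
  set K := (MonoidHom.transferSylow Q (hQ_cyclic.normalizer_le_centralizer hq_def.symm)).ker
  have hKQ : K.IsComplement' Q := hQ_cyclic.isComplement' hq_def.symm
  have hPK : (P : Subgroup G) ≤ K := P.isPGroup'.le_of_coprime_index <| by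
    rw [hKQ.symm.index_eq_card, hQ, Nat.coprime_primes Fact.out hq]
    exact hqp.symm
  have hK_dvd : Nat.card K ∣ Nat.card G := Subgroup.card_subgroup_dvd_card K
  have hK_lt : Nat.card K < Nat.card G := by
    rw [← hKQ.card_mul_card, hQ]
    exact lt_mul_right Nat.card_pos hq.one_lt
  have hPK_normal := ih _ hK_lt (hsq.squarefree_of_dvd hK_dvd)
    (fun s hs hsK => hmax s hs (hsK.trans hK_dvd)) (P.subtype hPK) rfl
  -- Normal Sylow subgroups are characteristic, and a characteristic subgroup of the normal
  -- subgroup `K` is normal in `G`.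
  have : ((P : Subgroup G).subgroupOf K).Characteristic := characteristic_of_normal _ hPK_normal
  rw [← Subgroup.map_subgroupOf_eq_of_le hPK]
  infer_instance

end Sylow

end SquarefreeOrder

lemma Nat.card_multiplicative_zmod (n : ℕ) : Nat.card (Multiplicative (ZMod n)) = n := by
  rw [Nat.card_congr Multiplicative.toAdd, Nat.card_zmod]

theorem exists_isRegularHom_zmod_of_squarefree {n : ℕ} (hsq : Squarefree n) (G : Type*) [Group G]
    (hG : Nat.card G = n) : ∃ ψ : G →* Hol (Multiplicative (ZMod n)), IsRegularHom ψ := by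
  induction n using Nat.strong_induction_on generalizing G with
  | _ n ih =>
  rcases eq_or_ne n 1 with rfl | hn1
  · have : Subsingleton G := (Nat.card_eq_one_iff_unique.mp hG).1
    exact ⟨1, fun _ _ _ => Subsingleton.elim _ _, fun _ => ⟨1, Subsingleton.elim _ _⟩⟩
  have hn0 := hsq.ne_zero
  have : Finite G := Nat.finite_of_card_ne_zero (hG ▸ hn0)
  have hne : n.primeFactors.Nonempty := Nat.nonempty_primeFactors.mpr (by omega)
  set p := n.primeFactors.max' hne
  obtain ⟨hp, hpn, -⟩ := Nat.mem_primeFactors.mp (n.primeFactors.max'_mem hne)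
  obtain ⟨hp_coprime, -, hsq_quot⟩ :=
    Nat.squarefree_mul_iff.mp ((Nat.mul_div_cancel' hpn).symm ▸ hsq)
  have := Fact.mk hp
  obtain ⟨P⟩ : Nonempty (Sylow p G) := inferInstance
  have hP : Nat.card P = p := P.card_eq_of_squarefree (hG ▸ hsq) (hG ▸ hpn)
  have := P.normal_of_squarefree (hG ▸ hsq) fun s hs hsG =>
    n.primeFactors.le_max' s (Nat.mem_primeFactors.mpr ⟨hs, hG ▸ hsG, hn0⟩)
  obtain ⟨H, hPH⟩ := Subgroup.exists_right_complement'_of_coprime P.card_coprime_index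
  have hH : Nat.card H = n / p := by
    rw [← hG, ← hPH.card_mul_card, hP, Nat.mul_div_cancel_left _ hp.pos]
  obtain ⟨ψ, hψ⟩ := ih (n / p) (Nat.div_lt_self (by omega) hp.one_lt) hsq_quot H hH
  have : IsCyclic P := isCyclic_of_prime_card hP
  have : IsCyclic (P × Multiplicative (ZMod (n / p))) :=
    Group.isCyclic_prod_iff.mpr ⟨inferInstance, inferInstance, by
      rwa [hP, Nat.card_multiplicative_zmod]⟩
  let e : P × Multiplicative (ZMod (n / p)) ≃* Multiplicative (ZMod n) :=
    mulEquivOfCyclicCardEq <| by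
      rw [Nat.card_prod, hP, Nat.card_multiplicative_zmod, Nat.card_multiplicative_zmod,
        Nat.mul_div_cancel' hpn]
  exact ⟨_, ((hψ.semidirectProduct _).comp_mulEquiv
    (SemidirectProduct.mulEquivSubgroup hPH).symm).holCongr_comp e⟩

lemma Nat.squarefree_prod_of_injOn_prime {ι : Type*} {s : Finset ι} {p : ι → ℕ}
    (hp : ∀ i ∈ s, (p i).Prime) (hinj : Set.InjOn p s) : Squarefree (∏ i ∈ s, p i) :=
  Finset.squarefree_prod_of_pairwise_isCoprime
    (fun i hi j hj hij => Nat.coprime_iff_isRelPrime.mp <|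
      (Nat.coprime_primes (hp i hi) (hp j hj)).mpr (hinj.ne hi hj hij))
    fun i hi => (hp i hi).squarefree

theorem exists_regular_subgroup_of_holomorph_cyclic_cunningham_general
    (l : ℕ) (p : ℕ → ℕ)
    (hprime : ∀ i, 1 ≤ i → i ≤ l → (p i).Prime)
    (hchain : ∀ i, 1 ≤ i → i < l → p i = 2 * p (i + 1) + 1)
    (n : ℕ) (hn : n = ∏ i ∈ Finset.Icc 1 l, p i)
    (G : Type) [Group G] (hG : Nat.card G = n) :
    ∃ M : Subgroup (Hol (Multiplicative (ZMod n))),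
      Nonempty (G ≃* M) ∧
      (∀ a b : Multiplicative (ZMod n), ∃ g ∈ M, holSmul g a = b) ∧
      (∀ g ∈ M, ∀ x : Multiplicative (ZMod n), holSmul g x = x → g = 1) := by
  have hanti : StrictAntiOn p (Set.Icc 1 l) :=
    strictAntiOn_of_add_one_lt Set.ordConnected_Icc fun i _ hi hi' => by
      have := hchain i hi.1 (Nat.lt_of_succ_le hi'.2)
      omega
  have hsq : Squarefree n := hn ▸ Nat.squarefree_prod_of_injOn_prime
    (fun i hi => hprime i (Finset.mem_Icc.mp hi).1 (Finset.mem_Icc.mp hi).2)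
    (by simpa only [Finset.coe_Icc] using hanti.injOn)
  obtain ⟨ψ, hψ⟩ := exists_isRegularHom_zmod_of_squarefree hsq G hG
  exact ⟨ψ.range, ⟨MonoidHom.ofInjective hψ.injective⟩, hψ.isRegular_range⟩

/-- Let `n = p₁ ⋯ p_l` be a Cunningham product and `G` any group of order `n`.  Then
`Hol(C_n)` contains a regular subgroup isomorphic to `G`: a subgroup whose induced
action on `C_n` is transitive with trivial point stabilisers.  (Equivalently, every
Galois field extension of degree `n` admits a Hopf–Galois structure of cyclic type.) -/
theorem exists_regular_subgroup_of_holomorph_cyclic_cunningham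
    (l : ℕ) (hl : 1 ≤ l) (p : ℕ → ℕ)
    (hprime : ∀ i, 1 ≤ i → i ≤ l → (p i).Prime)
    (hodd : ∀ i, 1 ≤ i → i ≤ l → Odd (p i))
    (hchain : ∀ i, 1 ≤ i → i < l → p i = 2 * p (i + 1) + 1)
    (n : ℕ) (hn : n = ∏ i ∈ Finset.Icc 1 l, p i)
    (G : Type) [Group G] (hG : Nat.card G = n) :
    ∃ M : Subgroup (Hol (Multiplicative (ZMod n))),
      Nonempty (G ≃* M) ∧
      (∀ a b : Multiplicative (ZMod n), ∃ g ∈ M, holSmul g a = b) ∧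
      (∀ g ∈ M, ∀ x : Multiplicative (ZMod n), holSmul g x = x → g = 1) :=
  exists_regular_subgroup_of_holomorph_cyclic_cunningham_general l p hprime hchain n hn G hG
end
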